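/- The upper bound ub(f,X,μ)_r equals the smallest eigenvalue of the matrix M = (∫_X f P_α P_β dμ)_{α,β}, where {P_α} is an orthonormal basis of the polynomials of degree at most r with respect to the inner product ⟨p,q⟩ = ∫_X pq dμ. -/

import Mathlib

/-!
For `q = ∑ α, c α • P α`, orthonormality turns `∫_X q²` into `c ⬝ᵥ c` and `∫_X f q²` into
`c ⬝ᵥ M c`, so on a single square the bound is a Rayleigh quotient of `M`, at least the smallest
eigenvalue and equal to it at a corresponding eigenvector. A feasible `σ` of degree `≤ 2r` is a
sum of squares of polynomials of degree `≤ r`: over an ordered field the top homogeneous parts of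
the squares cannot cancel. Writing `σ = ∑ i, qᵢ²` with coefficient vectors `cᵢ` then gives
`∫_X f σ = ∑ i, cᵢ ⬝ᵥ M cᵢ ≥ λ_min ∑ i, cᵢ ⬝ᵥ cᵢ = λ_min ∫_X σ = λ_min`.
-/

open MvPolynomial MeasureTheory

/-- The set `ℕⁿ_r` of exponent vectors of total degree at most `r`. -/
abbrev DegLe (n r : ℕ) : Type := {α : Fin n →₀ ℕ // (∑ i, α i) ≤ r}

noncomputable instance (n r : ℕ) : Fintype (DegLe n r) :=
  Fintype.ofInjective
    (fun a => fun i => (⟨a.1 i, Nat.lt_succ_of_le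
      ((Finset.single_le_sum (fun i _ => Nat.zero_le (a.1 i)) (Finset.mem_univ i)).trans
        a.2)⟩ : Fin (r + 1)))
    (fun a b h => Subtype.ext (Finsupp.ext fun i => congrArg Fin.val (congrFun h i)))

noncomputable instance (n r : ℕ) : DecidableEq (DegLe n r) := Classical.decEq _

open Matrix

theorem IsSumSq.exists_fin_sum_mul_self {R : Type*} [AddCommMonoid R] [Mul R] {s : R}
    (h : IsSumSq s) : ∃ (k : ℕ) (a : Fin k → R), s = ∑ i, a i * a i := by
  induction h with
  | zero => exact ⟨0, Fin.elim0, by simp⟩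
  | sq_add a _ ih =>
    obtain ⟨k, b, rfl⟩ := ih
    exact ⟨k + 1, Fin.cons a b, by simp [Fin.sum_univ_succ]⟩

namespace MvPolynomial

variable {σ R : Type*}

theorem homogeneousComponent_mul_of_totalDegree_le [CommSemiring R] {p q : MvPolynomial σ R}
    {d e : ℕ} (hp : p.totalDegree ≤ d) (hq : q.totalDegree ≤ e) :
    homogeneousComponent (d + e) (p * q) =
      homogeneousComponent d p * homogeneousComponent e q := by
  classical
  ext m
  by_cases hm : m.degree = d + e
  · rw [coeff_homogeneousComponent, if_pos hm, coeff_mul, coeff_mul]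
    refine Finset.sum_congr rfl fun x hx => ?_
    have hdeg : x.1.degree + x.2.degree = d + e := by
      rw [← map_add, Finset.HasAntidiagonal.mem_antidiagonal.mp hx, hm]
    simp only [coeff_homogeneousComponent]
    by_cases h1 : x.1.degree = d
    · rw [if_pos h1, if_pos (by omega)]
    · rw [if_neg h1, zero_mul]
      rcases lt_or_gt_of_ne h1 with h1 | h1
      · exact mul_eq_zero_of_right _
          (coeff_eq_zero_of_totalDegree_lt (by omega : q.totalDegree < x.2.degree))
      · exact mul_eq_zero_of_left
          (coeff_eq_zero_of_totalDegree_lt (by omega : p.totalDegree < x.1.degree)) _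
  · rw [coeff_homogeneousComponent, if_neg hm,
      ((homogeneousComponent_isHomogeneous d p).mul
        (homogeneousComponent_isHomogeneous e q)).coeff_eq_zero hm]

theorem homogeneousComponent_sum_mul_self [CommSemiring R] {ι : Type*} [Fintype ι]
    {p : ι → MvPolynomial σ R} {d : ℕ} (hp : ∀ i, (p i).totalDegree ≤ d) :
    homogeneousComponent (2 * d) (∑ i, p i * p i) =
      ∑ i, homogeneousComponent d (p i) * homogeneousComponent d (p i) := by
  simp only [map_sum, two_mul, homogeneousComponent_mul_of_totalDegree_le (hp _) (hp _)]

theorem eq_zero_of_sum_mul_self_eq_zero [Field R] [LinearOrder R] [IsStrictOrderedRing R]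
    {ι : Type*} [Fintype ι] {p : ι → MvPolynomial σ R} (h : ∑ i, p i * p i = 0) (i : ι) :
    p i = 0 := by
  refine funext fun x => ?_
  have := congrArg (eval x) h
  simp only [map_sum, map_mul, map_zero] at this
  simpa using (Finset.sum_eq_zero_iff_of_nonneg fun j _ => mul_self_nonneg _).mp this i
    (Finset.mem_univ i)

theorem homogeneousComponent_totalDegree_ne_zero [CommSemiring R] {p : MvPolynomial σ R}
    (hp : p ≠ 0) : homogeneousComponent p.totalDegree p ≠ 0 := by
  obtain ⟨m, hm, hdeg⟩ := Finset.exists_mem_eq_sup p.support (support_nonempty.mpr hp)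
    fun m => m.sum fun _ e => e
  refine ne_zero_iff.mpr ⟨m, ?_⟩
  rwa [coeff_homogeneousComponent, if_pos (by rw [totalDegree, hdeg]; rfl), ← mem_support_iff]

theorem totalDegree_sum_mul_self [Field R] [LinearOrder R] [IsStrictOrderedRing R]
    {ι : Type*} [Fintype ι] (p : ι → MvPolynomial σ R) :
    (∑ i, p i * p i).totalDegree = 2 * Finset.univ.sup fun i => (p i).totalDegree := by
  set d := Finset.univ.sup fun i => (p i).totalDegree
  have hp : ∀ i, (p i).totalDegree ≤ d := fun i =>
    Finset.le_sup (f := fun i => (p i).totalDegree) (Finset.mem_univ i)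
  refine le_antisymm ?_ ?_
  · refine (totalDegree_finsetSum _ _).trans (Finset.sup_le fun i _ => ?_)
    exact (totalDegree_mul _ _).trans (by linarith [hp i])
  · rcases Nat.eq_zero_or_pos d with hd | hd
    · simp [hd]
    have hne : (Finset.univ : Finset ι).Nonempty :=
      Finset.nonempty_iff_ne_empty.mpr fun h => by simp [d, h] at hd
    obtain ⟨i, -, hi⟩ := Finset.exists_mem_eq_sup _ hne fun i => (p i).totalDegree
    have hpi : p i ≠ 0 := by rintro h; rw [h, totalDegree_zero] at hi; omega
    have htop : homogeneousComponent (2 * d) (∑ i, p i * p i) ≠ 0 := by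
      rw [homogeneousComponent_sum_mul_self hp]
      exact fun h => homogeneousComponent_totalDegree_ne_zero hpi
        (hi.symm ▸ eq_zero_of_sum_mul_self_eq_zero h i)
    by_contra! hlt
    exact htop (homogeneousComponent_eq_zero _ _ hlt)

theorem totalDegree_sum_smul_le {ι : Type*} [Fintype ι] [CommSemiring R]
    {P : ι → MvPolynomial σ R} {d : ℕ} (hP : ∀ α, (P α).totalDegree ≤ d) (c : ι → R) :
    (∑ α, c α • P α).totalDegree ≤ d := by
  simp only [← mem_restrictTotalDegree] at hP ⊢
  exact Submodule.sum_mem _ fun α _ => Submodule.smul_mem _ _ (hP α)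

theorem integral_eval_mul_sum_smul_sq {ι : Type*} [Fintype ι]
    [MeasurableSpace (σ → ℝ)] {ν : Measure (σ → ℝ)}
    (hν : ∀ p : MvPolynomial σ ℝ, Integrable (fun x => eval x p) ν)
    (g : MvPolynomial σ ℝ) (P : ι → MvPolynomial σ ℝ) (c : ι → ℝ) :
    ∫ x, eval x g * (eval x (∑ α, c α • P α) * eval x (∑ α, c α • P α)) ∂ν =
      c ⬝ᵥ (Matrix.of (fun α β => ∫ x, eval x g * (eval x (P α) * eval x (P β)) ∂ν) *ᵥ c) := by
  have hint : ∀ α β, Integrable (fun x => eval x g * (eval x (P α) * eval x (P β))) ν :=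
    fun α β => by simpa using hν (g * (P α * P β))
  calc ∫ x, eval x g * (eval x (∑ α, c α • P α) * eval x (∑ α, c α • P α)) ∂ν
      = ∫ x, ∑ α, ∑ β, c α * (c β * (eval x g * (eval x (P α) * eval x (P β)))) ∂ν := by
        congr 1 with x
        simp only [map_sum, smul_eval]
        rw [Finset.sum_mul_sum, Finset.mul_sum]
        refine Finset.sum_congr rfl fun α _ => ?_
        rw [Finset.mul_sum]
        exact Finset.sum_congr rfl fun β _ => by ring
    _ = ∑ α, ∑ β, c α * (c β * ∫ x, eval x g * (eval x (P α) * eval x (P β)) ∂ν) := by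
        rw [integral_finsetSum _ fun α _ =>
          integrable_finsetSum _ fun β _ => ((hint α β).const_mul _).const_mul _]
        refine Finset.sum_congr rfl fun α _ => ?_
        rw [integral_finsetSum _ fun β _ => ((hint α β).const_mul _).const_mul _]
        simp only [integral_const_mul]
    _ = _ := by
        simp only [dotProduct, mulVec, of_apply, Finset.mul_sum]
        exact Finset.sum_congr rfl fun α _ => Finset.sum_congr rfl fun β _ => by ring

end MvPolynomial

theorem IsSumSq.exists_sum_mul_self_totalDegree_le {σ R : Type*} [Field R]
    [LinearOrder R] [IsStrictOrderedRing R] {s : MvPolynomial σ R} (hs : IsSumSq s) {d : ℕ}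
    (hsd : s.totalDegree ≤ 2 * d) :
    ∃ (k : ℕ) (a : Fin k → MvPolynomial σ R),
      s = ∑ i, a i * a i ∧ ∀ i, (a i).totalDegree ≤ d := by
  obtain ⟨k, a, rfl⟩ := hs.exists_fin_sum_mul_self
  refine ⟨k, a, rfl, fun i => ?_⟩
  rw [MvPolynomial.totalDegree_sum_mul_self] at hsd
  have := Finset.le_sup (f := fun i => (a i).totalDegree) (Finset.mem_univ i)
  omega

namespace Matrix.IsHermitian

variable {ι : Type*} [Fintype ι] [DecidableEq ι] {A : Matrix ι ι ℝ}

theorem posSemidef_sub_iInf_eigenvalues (hA : A.IsHermitian) :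
    (A - algebraMap ℝ _ (⨅ i, hA.eigenvalues i)).PosSemidef := by
  refine posSemidef_iff_isHermitian_and_spectrum_nonneg.mpr ⟨?_, ?_⟩
  · exact hA.sub (isHermitian_diagonal_of_self_adjoint _ (by simp [IsSelfAdjoint]))
  · rw [← spectrum.sub_singleton_eq, hA.spectrum_real_eq_range_eigenvalues]
    rintro _ ⟨_, ⟨i, rfl⟩, _, rfl, rfl⟩
    exact sub_nonneg.mpr (ciInf_le (Finite.bddBelow_range hA.eigenvalues) i)

theorem iInf_eigenvalues_mul_dotProduct_self_le (hA : A.IsHermitian) (c : ι → ℝ) :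
    (⨅ i, hA.eigenvalues i) * (c ⬝ᵥ c) ≤ c ⬝ᵥ (A *ᵥ c) := by
  have := hA.posSemidef_sub_iInf_eigenvalues.dotProduct_mulVec_nonneg c
  rw [star_trivial, sub_mulVec, dotProduct_sub, algebraMap_eq_diagonal] at this
  simpa [mulVec_diagonal, dotProduct, Finset.mul_sum, mul_left_comm] using this

theorem exists_dotProduct_self_eq_one_and_eq_iInf_eigenvalues [Nonempty ι]
    (hA : A.IsHermitian) :
    ∃ c : ι → ℝ, c ⬝ᵥ c = 1 ∧ c ⬝ᵥ (A *ᵥ c) = ⨅ i, hA.eigenvalues i := by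
  obtain ⟨i, hi⟩ := exists_eq_ciInf_of_finite (f := hA.eigenvalues)
  have hnorm : (hA.eigenvectorBasis i).ofLp ⬝ᵥ (hA.eigenvectorBasis i).ofLp = 1 := by
    have h := real_inner_self_eq_norm_sq (hA.eigenvectorBasis i)
    rwa [hA.eigenvectorBasis.orthonormal.1 i, one_pow, EuclideanSpace.inner_eq_star_dotProduct,
      star_trivial] at h
  refine ⟨_, hnorm, ?_⟩
  rw [hA.mulVec_eigenvectorBasis, dotProduct_smul, hnorm, smul_eq_mul, mul_one, hi]

end Matrix.IsHermitian

section LasserreBound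

variable {σ ι : Type*} [Fintype ι] [DecidableEq ι] [MeasurableSpace (σ → ℝ)]
  {ν : Measure (σ → ℝ)} {f : MvPolynomial σ ℝ} {P : ι → MvPolynomial σ ℝ} {M : Matrix ι ι ℝ}

theorem integral_sum_smul_sq_of_orthonormal
    (hν : ∀ p : MvPolynomial σ ℝ, Integrable (fun x => eval x p) ν)
    (horth : ∀ α β, ∫ x, eval x (P α) * eval x (P β) ∂ν = if α = β then 1 else 0)
    (c : ι → ℝ) :
    ∫ x, eval x (∑ α, c α • P α) * eval x (∑ α, c α • P α) ∂ν = c ⬝ᵥ c := by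
  have h := integral_eval_mul_sum_smul_sq hν 1 P c
  simp only [map_one, one_mul, horth] at h
  rwa [show (of fun α β : ι => if α = β then (1 : ℝ) else 0) = 1 by ext; simp [one_apply],
    one_mulVec] at h

theorem iInf_eigenvalues_mul_integral_sq_le
    (hν : ∀ p : MvPolynomial σ ℝ, Integrable (fun x => eval x p) ν)
    (horth : ∀ α β, ∫ x, eval x (P α) * eval x (P β) ∂ν = if α = β then 1 else 0)
    (hMdef : M = of fun α β => ∫ x, eval x f * (eval x (P α) * eval x (P β)) ∂ν)
    (hM : M.IsHermitian) {q : MvPolynomial σ ℝ} (hq : q ∈ Submodule.span ℝ (Set.range P)) :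
    (⨅ i, hM.eigenvalues i) * ∫ x, eval x q * eval x q ∂ν ≤
      ∫ x, eval x f * (eval x q * eval x q) ∂ν := by
  obtain ⟨c, rfl⟩ := (Submodule.mem_span_range_iff_exists_fun ℝ).mp hq
  rw [integral_sum_smul_sq_of_orthonormal hν horth, integral_eval_mul_sum_smul_sq hν, ← hMdef]
  exact hM.iInf_eigenvalues_mul_dotProduct_self_le c

theorem iInf_eigenvalues_mul_integral_le_of_isSumSq
    (hν : ∀ p : MvPolynomial σ ℝ, Integrable (fun x => eval x p) ν)
    (horth : ∀ α β, ∫ x, eval x (P α) * eval x (P β) ∂ν = if α = β then 1 else 0)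
    (hMdef : M = of fun α β => ∫ x, eval x f * (eval x (P α) * eval x (P β)) ∂ν)
    (hM : M.IsHermitian) {d : ℕ}
    (hspan : ∀ p : MvPolynomial σ ℝ, p.totalDegree ≤ d → p ∈ Submodule.span ℝ (Set.range P))
    {s : MvPolynomial σ ℝ} (hs : IsSumSq s) (hsd : s.totalDegree ≤ 2 * d) :
    (⨅ i, hM.eigenvalues i) * ∫ x, eval x s ∂ν ≤ ∫ x, eval x f * eval x s ∂ν := by
  obtain ⟨k, a, rfl, ha⟩ := hs.exists_sum_mul_self_totalDegree_le hsd
  have hint : ∀ (g : MvPolynomial σ ℝ) (i : Fin k),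
      Integrable (fun x => eval x g * (eval x (a i) * eval x (a i))) ν :=
    fun g i => by simpa using hν (g * (a i * a i))
  simp only [map_sum, map_mul, Finset.mul_sum]
  rw [integral_finsetSum _ fun i _ => by simpa using hint 1 i,
    integral_finsetSum _ fun i _ => hint f i, Finset.mul_sum]
  exact Finset.sum_le_sum fun i _ =>
    iInf_eigenvalues_mul_integral_sq_le hν horth hMdef hM (hspan _ (ha i))

end LasserreBound

theorem lasserreUB_eq_min_eigenvalue_general (n r : ℕ) (X : Set (Fin n → ℝ))
    (hX : IsCompact X)
    (μ : Measure (Fin n → ℝ)) [IsFiniteMeasure μ]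
    (f : MvPolynomial (Fin n) ℝ)
    (P : DegLe n r → MvPolynomial (Fin n) ℝ)
    (hPdeg : ∀ α, (P α).totalDegree ≤ r)
    (horth : ∀ α β, (∫ x in X, eval x (P α) * eval x (P β) ∂μ) =
      if α = β then 1 else 0)
    (hspan : ∀ p : MvPolynomial (Fin n) ℝ, p.totalDegree ≤ r →
      p ∈ Submodule.span ℝ (Set.range P))
    (M : Matrix (DegLe n r) (DegLe n r) ℝ)
    (hMdef : M = Matrix.of fun α β => ∫ x in X, eval x f * (eval x (P α) * eval x (P β)) ∂μ)
    (hM : M.IsHermitian) :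
    sInf {v : ℝ | ∃ σ : MvPolynomial (Fin n) ℝ, IsSumSq σ ∧ σ.totalDegree ≤ 2 * r ∧
        (∫ x in X, eval x σ ∂μ) = 1 ∧ v = ∫ x in X, eval x f * eval x σ ∂μ} =
      ⨅ i, hM.eigenvalues i := by
  have hν : ∀ p : MvPolynomial (Fin n) ℝ, IntegrableOn (fun x => eval x p) X μ :=
    fun p => (continuous_eval p).continuousOn.integrableOn_compact hX
  refine IsLeast.csInf_eq ⟨?_, ?_⟩
  · have : Nonempty (DegLe n r) := ⟨⟨0, by simp⟩⟩
    obtain ⟨c, hc, hcM⟩ := hM.exists_dotProduct_self_eq_one_and_eq_iInf_eigenvalues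
    have hdeg := totalDegree_sum_smul_le hPdeg c
    refine ⟨_, IsSumSq.mul_self (∑ α, c α • P α),
      (totalDegree_mul _ _).trans (by omega), ?_, ?_⟩
    · rw [← hc, ← integral_sum_smul_sq_of_orthonormal hν horth]
      simp only [map_mul]
    · rw [← hcM, hMdef, ← integral_eval_mul_sum_smul_sq hν]
      simp only [map_mul]
  · rintro v ⟨s, hs, hsd, hs1, rfl⟩
    simpa [hs1] using iInf_eigenvalues_mul_integral_le_of_isSumSq hν horth hMdef hM hspan hs hsd

/-- The Lasserre upper bound `ub(f,X,μ)_r` equals the smallest eigenvalue of the matrix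
`M = (∫_X f P_α P_β dμ)_{α,β}`, where `{P_α : |α| ≤ r}` is an orthonormal basis of the
polynomials of degree at most `r` w.r.t. the inner product `⟨p,q⟩ = ∫_X p q dμ`. -/
theorem lasserreUB_eq_min_eigenvalue (n r : ℕ) (X : Set (Fin n → ℝ))
    (hX : IsCompact X) (hXint : (interior X).Nonempty)
    (μ : Measure (Fin n → ℝ)) [IsFiniteMeasure μ] (hsupp : μ Xᶜ = 0) (hpos : 0 < μ X)
    (f : MvPolynomial (Fin n) ℝ)
    (P : DegLe n r → MvPolynomial (Fin n) ℝ)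
    (hPdeg : ∀ α, (P α).totalDegree ≤ r)
    (horth : ∀ α β, (∫ x in X, eval x (P α) * eval x (P β) ∂μ) =
      if α = β then 1 else 0)
    (hspan : ∀ p : MvPolynomial (Fin n) ℝ, p.totalDegree ≤ r →
      p ∈ Submodule.span ℝ (Set.range P))
    (M : Matrix (DegLe n r) (DegLe n r) ℝ)
    (hMdef : M = Matrix.of fun α β => ∫ x in X, eval x f * (eval x (P α) * eval x (P β)) ∂μ)
    (hM : M.IsHermitian) :
    sInf {v : ℝ | ∃ σ : MvPolynomial (Fin n) ℝ, IsSumSq σ ∧ σ.totalDegree ≤ 2 * r ∧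
        (∫ x in X, eval x σ ∂μ) = 1 ∧ v = ∫ x in X, eval x f * eval x σ ∂μ} =
      ⨅ i, hM.eigenvalues i :=
  lasserreUB_eq_min_eigenvalue_general n r X hX μ f P hPdeg horth hspan M hMdef hM
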